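/- For every n ≥ 0, the number of pairs (a,b) of nonnegative integers satisfying a·g_n + b·g_{n+2} < g_n·g_{n+2} equals (g_{n+1}^2 + 3g_{n+1})/2. -/

import Mathlib

/-- The odd-index Fibonacci numbers: 1, 1, 2, 5, 13, 34, ... -/
def g : ℕ → ℤ
  | 0 => 1
  | 1 => 1
  | n + 2 => 3 * g (n + 1) - g n

lemma rep_unique {p q : ℕ} (hco : Nat.Coprime p q) {a a' b b' : ℕ}
    (ha : a < q) (ha' : a' < q) (h : a * p + b * q = a' * p + b' * q) :
    a = a' ∧ b = b' := by
  have hcop : IsCoprime (q:ℤ) (p:ℤ) := by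
    rw [Int.isCoprime_iff_gcd_eq_one]
    simpa using hco.symm
  have hdv : (q:ℤ) ∣ ((a:ℤ) - a') * p := ⟨(b':ℤ) - b, by push_cast at h ⊢; linarith⟩
  have hdvd : (q:ℤ) ∣ ((a:ℤ) - a') := hcop.dvd_of_dvd_mul_right hdv
  have haa : (a:ℤ) - a' = 0 := Int.eq_zero_of_abs_lt_dvd hdvd (by rw [abs_sub_lt_iff]; constructor <;> push_cast <;> omega)
  have h1 : a = a' := by omega
  subst h1
  have hq0 : 0 < q := by omega
  refine ⟨rfl, Nat.eq_of_mul_eq_mul_right hq0 (by omega)⟩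

lemma rep_exists {p q : ℕ} (hp : 0 < p) (hq : 0 < q) (hco : Nat.Coprime p q)
    {m : ℕ} (h1 : p * q < m + p + q) (h2 : m < p * q) :
    ∃ a b, a < q ∧ b < p ∧ a * p + b * q = m := by
  haveI : NeZero q := ⟨hq.ne'⟩
  have hu : IsUnit (p : ZMod q) := (ZMod.unitOfCoprime p hco).isUnit
  set a : ℕ := ((m : ZMod q) * (p : ZMod q)⁻¹).val with hadef
  have haq : a < q := ZMod.val_lt _
  have hcast : ((a * p : ℕ) : ZMod q) = (m : ZMod q) := by
    push_cast [hadef, ZMod.natCast_val, ZMod.cast_id]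
    rw [mul_assoc, ZMod.inv_mul_of_unit _ hu, mul_one]
  have hdvd : (q:ℤ) ∣ ((a*p : ℕ) : ℤ) - (m:ℤ) := by
    rw [← ZMod.intCast_zmod_eq_zero_iff_dvd]
    push_cast
    push_cast at hcast
    rw [hcast]; ring
  have hle : a * p ≤ m := by
    by_contra hlt
    push_neg at hlt
    have hpos : (0:ℤ) < (a*p:ℕ) - (m:ℤ) := by push_cast; omega
    have hub : ((a*p:ℕ):ℤ) - (m:ℤ) < q := by
      have : a * p ≤ (q-1) * p := Nat.mul_le_mul_right p (by omega)
      have h3 : (q-1)*p + p = q * p := by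
        have : (q-1) + 1 = q := by omega
        calc (q-1)*p + p = ((q-1)+1)*p := by ring
        _ = q * p := by rw [this]
      push_cast
      have : a * p < q * p := by omega
      have hpq : p * q = q * p := Nat.mul_comm p q
      omega
    have := Int.le_of_dvd hpos hdvd
    omega
  have hdvdn : q ∣ m - a * p := by
    have : (q:ℤ) ∣ (m:ℤ) - ((a*p:ℕ):ℤ) := by
      have h5 := dvd_neg.mpr hdvd; rwa [neg_sub] at h5
    have h4 : ((m - a*p : ℕ):ℤ) = (m:ℤ) - (a*p:ℕ) := by push_cast; omega
    exact_mod_cast h4 ▸ this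
  refine ⟨a, (m - a*p)/q, haq, ?_, ?_⟩
  · have hb : (m - a*p)/q * q = m - a*p := Nat.div_mul_cancel hdvdn
    have : (m - a*p)/q * q < p * q := by omega
    exact Nat.lt_of_mul_lt_mul_right this
  · have hb : (m - a*p)/q * q = m - a*p := Nat.div_mul_cancel hdvdn
    omega

lemma count_lemma (p q : ℕ) (hp : 0 < p) (hq : 0 < q) (hco : Nat.Coprime p q) :
    2 * ((Finset.range q ×ˢ Finset.range p).filter
      (fun x => x.1 * p + x.2 * q < p * q)).card + 1 = p * q + p + q := by
  classical
  set R := Finset.range q ×ˢ Finset.range p with hR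
  have hmemR : ∀ x : ℕ × ℕ, x ∈ R ↔ x.1 < q ∧ x.2 < p := by
    intro x; simp [hR, Finset.mem_product]
  set T := R.filter (fun x => x.1 * p + x.2 * q < p * q) with hT
  set U := R.filter (fun x => ¬ (x.1 * p + x.2 * q < p * q)) with hU
  set V := R.filter (fun x => x.1 * p + x.2 * q + p + q ≤ p * q) with hV
  set W := R.filter (fun x => x.1 * p + x.2 * q < p*q ∧ p*q < x.1 * p + x.2 * q + p + q)
    with hW
  -- key identity for the reflection
  have key : ∀ a b : ℕ, a < q → b < p →
      ((q-1-a)*p + (p-1-b)*q) + (a*p+b*q) + (p+q) = 2*(p*q) := by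
    intro a b ha hb
    obtain ⟨s, hs⟩ : ∃ s, q - 1 - a = s := ⟨_, rfl⟩
    obtain ⟨t, ht⟩ : ∃ t, p - 1 - b = t := ⟨_, rfl⟩
    have h1 : s + (a+1) = q := by omega
    have h2 : t + (b+1) = p := by omega
    rw [hs, ht, ← h1, ← h2]; ring
  have hTU : T.card + U.card = q * p := by
    rw [hT, hU, Finset.card_filter_add_card_filter_not, hR,
      Finset.card_product, Finset.card_range, Finset.card_range]
  have hVW : V.card + W.card = T.card := by
    have h := Finset.card_filter_add_card_filter_not
      (s := T) (fun x : ℕ × ℕ => x.1 * p + x.2 * q + p + q ≤ p * q)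
    rw [hT, Finset.filter_filter, Finset.filter_filter] at h
    have e1 : V = R.filter (fun x : ℕ × ℕ =>
        x.1 * p + x.2 * q < p * q ∧ x.1 * p + x.2 * q + p + q ≤ p * q) := by
      rw [hV]; apply Finset.filter_congr; intro x _; constructor
      · intro hx; exact ⟨by omega, hx⟩
      · intro hx; exact hx.2
    have e2 : W = R.filter (fun x : ℕ × ℕ =>
        x.1 * p + x.2 * q < p * q ∧ ¬ (x.1 * p + x.2 * q + p + q ≤ p * q)) := by
      rw [hW]; apply Finset.filter_congr; intro x _; constructor
      · intro hx; exact ⟨hx.1, by omega⟩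
      · intro hx; exact ⟨hx.1, by omega⟩
    rw [e1, e2, h]
  have hUV : U.card = V.card := by
    apply Finset.card_bij (fun x _ => ((q - 1 - x.1, p - 1 - x.2) : ℕ × ℕ))
    · intro x hx
      rw [hU, Finset.mem_filter, hmemR] at hx
      obtain ⟨⟨h1, h2⟩, h3⟩ := hx
      have hk := key x.1 x.2 h1 h2
      rw [hV, Finset.mem_filter, hmemR]
      refine ⟨⟨by omega, by omega⟩, by dsimp only; omega⟩
    · intro x hx y hy hxy
      rw [hU, Finset.mem_filter, hmemR] at hx hy
      rw [Prod.mk.injEq] at hxy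
      have hxy2 : x.1 = y.1 ∧ x.2 = y.2 := by omega
      exact Prod.ext hxy2.1 hxy2.2
    · intro y hy
      rw [hV, Finset.mem_filter, hmemR] at hy
      obtain ⟨⟨h1, h2⟩, h3⟩ := hy
      refine ⟨(q - 1 - y.1, p - 1 - y.2), ?_, ?_⟩
      · rw [hU, Finset.mem_filter, hmemR]
        have hk := key (q-1-y.1) (p-1-y.2) (by omega) (by omega)
        have e1 : q - 1 - (q - 1 - y.1) = y.1 := by omega
        have e2 : p - 1 - (p - 1 - y.2) = y.2 := by omega
        simp only [e1, e2] at hk ⊢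
        refine ⟨⟨by omega, by omega⟩, by omega⟩
      · have e1 : q - 1 - (q - 1 - y.1) = y.1 := by omega
        have e2 : p - 1 - (p - 1 - y.2) = y.2 := by omega
        simp [e1, e2]
  have hWcard : W.card = p + q - 1 := by
    have : W.card = (Finset.Ioo (p*q) (p*q + p + q)).card := by
      apply Finset.card_bij (fun x _ => x.1 * p + x.2 * q + p + q)
      · intro x hx
        rw [hW, Finset.mem_filter, hmemR] at hx
        rw [Finset.mem_Ioo]
        omega
      · intro x hx y hy hxy
        rw [hW, Finset.mem_filter, hmemR] at hx hy
        have heq : x.1 * p + x.2 * q = y.1 * p + y.2 * q := by omega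
        have h := rep_unique (p := p) (q := q) (b := x.2) (b' := y.2) hco hx.1.1 hy.1.1 heq
        exact Prod.ext h.1 h.2
      · intro m hm
        rw [Finset.mem_Ioo] at hm
        have hm2 : p + q ≤ m := by
          have hpq1 : p + q ≤ p * q + 1 := by
            obtain ⟨p', rfl⟩ := Nat.exists_eq_succ_of_ne_zero hp.ne'
            have hmul : p' ≤ p' * q := Nat.le_mul_of_pos_right _ hq
            have hexp : p'.succ * q = p' * q + q := by simp [Nat.succ_mul]
            omega
          omega
        obtain ⟨a, b, ha, hb, hab⟩ := rep_exists hp hq hco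
          (m := m - p - q) (by omega) (by omega)
        refine ⟨(a, b), ?_, by dsimp only; omega⟩
        rw [hW, Finset.mem_filter, hmemR]
        exact ⟨⟨ha, hb⟩, by dsimp only; omega⟩
    rw [this, Nat.card_Ioo]; omega
  have hc : p * q = q * p := Nat.mul_comm p q
  omega

lemma g_aux : ∀ n, 1 ≤ g n ∧ g n ≤ g (n + 1)
  | 0 => by simp [g]
  | n + 1 => by
    have ih := g_aux n
    have hg : g (n + 2) = 3 * g (n + 1) - g n := rfl
    exact ⟨by linarith [ih.1, ih.2], by linarith [ih.1, ih.2]⟩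

lemma g_pos (n : ℕ) : 0 < g n := lt_of_lt_of_le zero_lt_one (g_aux n).1

lemma g_det : ∀ n, g n * g (n + 2) = g (n + 1) ^ 2 + 1
  | 0 => by simp [g]
  | n + 1 => by
    have ih := g_det n
    have hn : g n = 3 * g (n + 1) - g (n + 2) := by
      have : g (n + 2) = 3 * g (n + 1) - g n := rfl
      linarith
    have h3 : g (n + 3) = 3 * g (n + 2) - g (n + 1) := rfl
    rw [h3]
    linear_combination ih - g (n + 2) * hn

lemma g_sum (n : ℕ) : g n + g (n + 2) = 3 * g (n + 1) := by
  have : g (n + 2) = 3 * g (n + 1) - g n := rfl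
  linarith

lemma g_coprime (n : ℕ) : Int.gcd (g n) (g (n + 2)) = 1 := by
  set k := Int.gcd (g n) (g (n + 2)) with hk
  have d1 : (k : ℤ) ∣ g n := Int.gcd_dvd_left _ _
  have d2 : (k : ℤ) ∣ g (n + 2) := Int.gcd_dvd_right _ _
  have e : g n * (7 * g (n + 2) - g n) - g (n + 2) * g (n + 2) = 9 := by
    have h1 := g_det n
    have h2 := g_sum n
    linear_combination 9 * h1 - (g n + g (n + 2) + 3 * g (n + 1)) * h2
  have h9 : (k : ℤ) ∣ 9 := by
    rw [← e]
    exact dvd_sub (d1.mul_right _) (d2.mul_right _)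
  have h9' : k ∣ 9 := by exact_mod_cast h9
  have h3 : ¬ (3 ∣ k) := by
    intro h3
    have h3z : (3 : ℤ) ∣ g n := dvd_trans (by exact_mod_cast Int.natCast_dvd_natCast.mpr h3) d1
    have hdd : (3 : ℤ) ∣ g (n + 1) ^ 2 + 1 := by
      rw [← g_det n]; exact h3z.mul_right _
    have hz : ((g (n + 1) ^ 2 + 1 : ℤ) : ZMod 3) = 0 := by
      rw [ZMod.intCast_zmod_eq_zero_iff_dvd]; exact_mod_cast hdd
    push_cast at hz
    have : ∀ x : ZMod 3, x ^ 2 + 1 ≠ 0 := by decide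
    exact this _ hz
  have hk9 : k ≤ 9 := Nat.le_of_dvd (by norm_num) h9'
  interval_cases k <;> omega

theorem lattice_point_count (n : ℕ) :
    2 * (Set.ncard {p : ℕ × ℕ |
        (p.1 : ℤ) * g n + (p.2 : ℤ) * g (n + 2) < g n * g (n + 2)} : ℤ) =
      g (n + 1) ^ 2 + 3 * g (n + 1) := by
  classical
  set P := (g n).natAbs with hPdef
  set Q := (g (n + 2)).natAbs with hQdef
  have hP : (P : ℤ) = g n := Int.natAbs_of_nonneg (g_pos n).le
  have hQ : (Q : ℤ) = g (n + 2) := Int.natAbs_of_nonneg (g_pos (n + 2)).le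
  have hPpos : 0 < P := by
    have : (0 : ℤ) < (P : ℤ) := hP ▸ g_pos n
    exact_mod_cast this
  have hQpos : 0 < Q := by
    have : (0 : ℤ) < (Q : ℤ) := hQ ▸ g_pos (n + 2)
    exact_mod_cast this
  have hco : Nat.Coprime P Q := g_coprime n
  have hset : {x : ℕ × ℕ |
      (x.1 : ℤ) * g n + (x.2 : ℤ) * g (n + 2) < g n * g (n + 2)} =
      ↑((Finset.range Q ×ˢ Finset.range P).filter
        (fun x => x.1 * P + x.2 * Q < P * Q)) := by
    ext x
    simp only [Set.mem_setOf_eq, Finset.coe_filter, Finset.mem_product,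
      Finset.mem_range, Set.mem_setOf_eq]
    constructor
    · intro h
      have hN : x.1 * P + x.2 * Q < P * Q := by
        rw [← hP, ← hQ] at h
        exact_mod_cast h
      refine ⟨⟨?_, ?_⟩, hN⟩
      · have h1 : x.1 * P < Q * P := by
          have hc := Nat.mul_comm P Q
          omega
        exact Nat.lt_of_mul_lt_mul_right h1
      · have h2 : x.2 * Q < P * Q := by omega
        exact Nat.lt_of_mul_lt_mul_right h2
    · rintro ⟨-, hN⟩
      rw [← hP, ← hQ]
      exact_mod_cast hN
  rw [hset, Set.ncard_coe_finset]
  have hcount := count_lemma P Q hPpos hQpos hco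
  have hcast : 2 * (((Finset.range Q ×ˢ Finset.range P).filter
      (fun x => x.1 * P + x.2 * Q < P * Q)).card : ℤ) + 1
      = (P : ℤ) * Q + P + Q := by exact_mod_cast hcount
  rw [hP, hQ] at hcast
  have h1 := g_det n
  have h2 := g_sum n
  linarith
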